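/- If a formula A is not provable in NF, then A fails in some finite Sub(A)-transitive N-model: the canonical model built from A-maximally NF-consistent subsets of ~Sub(A) (with X ≺_B Y iff □B ∉ X or B ∈ Y) is Sub(A)-transitive, i.e., for every □□B ∈ Sub(A) and worlds X, Y, Z, if X ≺_{□B} Y and Y ≺_B Z then X ≺_B Z. -/
import Mathlib


/-- Modal formulas: propositional variables, ⊥, ∧, ∨, →, □.  Negation is defined. -/
inductive Formula : Type
  | var : ℕ → Formula
  | bot : Formula
  | and : Formula → Formula → Formula
  | or : Formula → Formula → Formula
  | imp : Formula → Formula → Formula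
  | box : Formula → Formula
deriving DecidableEq

namespace Formula
/-- ¬A := A → ⊥ -/
def neg (A : Formula) : Formula := A.imp .bot
end Formula

/-- `A` is a propositional tautology (in the modal language): it is true under every
assignment of truth values that respects the propositional connectives (variables and
boxed formulas are treated as atoms). -/
def IsTautology (A : Formula) : Prop :=
  ∀ v : Formula → Prop,
    (¬ v .bot) →
    (∀ B C, v (.and B C) ↔ (v B ∧ v C)) →
    (∀ B C, v (.or B C) ↔ (v B ∨ v C)) →
    (∀ B C, v (.imp B C) ↔ (v B → v C)) →
    v A

/-- Satisfaction in an N-model `(W, {≺_B}, ⊩)` with relations `R` and valuation `V`: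
`x ⊩ □B` iff every `y` with `x ≺_B y` satisfies `B`. -/
def Sat {W : Type} (R : Formula → W → W → Prop) (V : W → ℕ → Prop) :
    W → Formula → Prop
  | w, .var n => V w n
  | _, .bot => False
  | w, .and A B => Sat R V w A ∧ Sat R V w B
  | w, .or A B => Sat R V w A ∨ Sat R V w B
  | w, .imp A B => Sat R V w A → Sat R V w B
  | w, .box A => ∀ y, R A w y → Sat R V y A

/-- The set of subformulas Sub(A). -/
def subf : Formula → Finset Formula
  | .var n => {.var n}
  | .bot => {.bot}
  | .and A B => insert (.and A B) (subf A ∪ subf B)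
  | .or A B => insert (.or A B) (subf A ∪ subf B)
  | .imp A B => insert (.imp A B) (subf A ∪ subf B)
  | .box A => insert (.box A) (subf A)

/-- The logic NF: all propositional tautologies plus □A → □□A, with MP and Nec. -/
inductive NFProv : Formula → Prop
  | taut {A} : IsTautology A → NFProv A
  | four (A : Formula) : NFProv (A.box.imp A.box.box)
  | mp {A B} : NFProv (A.imp B) → NFProv A → NFProv B
  | nec {A} : NFProv A → NFProv A.box

/-- `~B`: `C` if `B = ¬C`, and `¬B` otherwise. -/
def simneg : Formula → Formula
  | .imp B .bot => B
  | B => B.neg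

/-- `~Sub(A) = Sub(A) ∪ {~B : B ∈ Sub(A)}`. -/
def nsub (A : Formula) : Finset Formula := subf A ∪ (subf A).image simneg

/-- A conjunction of all elements of the finite set `X` (the empty conjunction is ⊤). -/
noncomputable def conj (X : Finset Formula) : Formula :=
  X.toList.foldr Formula.and (Formula.bot.imp Formula.bot)

/-- `X` is `L`-consistent: `L` does not prove `¬⋀X`. -/
def Cons (L : Formula → Prop) (X : Finset Formula) : Prop := ¬ L (conj X).neg

/-- `X` is `A`-maximally `L`-consistent. -/
def MaxCons (L : Formula → Prop) (A : Formula) (X : Finset Formula) : Prop :=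
  X ⊆ nsub A ∧ Cons L X ∧ ∀ B ∈ nsub A, B ∉ X → ¬ Cons L (insert B X)

/-- The canonical relations: `X ≺_B Y` iff `□B ∉ X` or `B ∈ Y`. -/
def canRel (L : Formula → Prop) (A : Formula) (B : Formula)
    (X Y : {X : Finset Formula // MaxCons L A X}) : Prop :=
  B.box ∉ X.1 ∨ B ∈ Y.1

/-- The canonical valuation: `X ⊩ p` iff `p ∈ X`. -/
def canVal (L : Formula → Prop) (A : Formula)
    (X : {X : Finset Formula // MaxCons L A X}) (n : ℕ) : Prop :=
  Formula.var n ∈ X.1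

section Aux

open Formula

/-- Evaluate a conjunction under a propositional valuation. -/
lemma conj_eval (v : Formula → Prop)
    (ha : ∀ B C, v (.and B C) ↔ (v B ∧ v C))
    (hi : ∀ B C, v (.imp B C) ↔ (v B → v C))
    (Y : Finset Formula) : v (conj Y) ↔ ∀ B ∈ Y, v B := by
  have key : ∀ l : List Formula,
      v (l.foldr Formula.and (Formula.bot.imp Formula.bot)) ↔ ∀ B ∈ l, v B := by
    intro l
    induction l with
    | nil => simp [hi]
    | cons b l ih => simp [ha, ih, List.forall_mem_cons]
  rw [conj, key]
  simp [Finset.mem_toList]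

lemma simneg_eval (v : Formula → Prop)
    (hb : ¬ v .bot)
    (hi : ∀ B C, v (.imp B C) ↔ (v B → v C))
    (B : Formula) : v (simneg B) ↔ ¬ v B := by
  cases B with
  | imp C D =>
      cases D with
      | bot => simp only [simneg, hi]; tauto
      | var n => simp only [simneg, Formula.neg, hi]; tauto
      | and E F => simp only [simneg, Formula.neg, hi]; tauto
      | or E F => simp only [simneg, Formula.neg, hi]; tauto
      | imp E F => simp only [simneg, Formula.neg, hi]; tauto
      | box E => simp only [simneg, Formula.neg, hi]; tauto
  | var n => simp only [simneg, Formula.neg, hi]; tauto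
  | bot => simp only [simneg, Formula.neg, hi]; tauto
  | and E F => simp only [simneg, Formula.neg, hi]; tauto
  | or E F => simp only [simneg, Formula.neg, hi]; tauto
  | box E => simp only [simneg, Formula.neg, hi]; tauto

end Aux
section Aux2

/-- Derive provability from a provable premise via a tautological implication. -/
lemma prov_of_taut1 {P Q : Formula} (h : NFProv P)
    (t : IsTautology (P.imp Q)) : NFProv Q :=
  NFProv.mp (NFProv.taut t) h

lemma mem_imp_prov {X : Finset Formula} {B : Formula} (hB : B ∈ X) :
    NFProv ((conj X).imp B) := by
  apply NFProv.taut
  intro v hb ha ho hi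
  rw [hi]
  intro hc
  exact (conj_eval v ha hi X).mp hc B hB

lemma notmem_imp_neg {A : Formula} {X : Finset Formula} (hX : MaxCons NFProv A X)
    {B : Formula} (hBn : B ∈ nsub A) (hB : B ∉ X) :
    NFProv ((conj X).imp B.neg) := by
  have h1 : NFProv (conj (insert B X)).neg := by
    have := hX.2.2 B hBn hB
    simpa [Cons] using this
  refine prov_of_taut1 h1 ?_
  intro v hb ha ho hi
  simp only [Formula.neg, hi, conj_eval v ha hi]
  intro h1 h2 h3
  apply h1
  intro C hC
  rcases Finset.mem_insert.mp hC with rfl | hC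
  · exact h3
  · exact h2 C hC

lemma prov_imp_mem {A : Formula} {X : Finset Formula} (hX : MaxCons NFProv A X)
    {B : Formula} (hBn : B ∈ nsub A) (hp : NFProv ((conj X).imp B)) : B ∈ X := by
  by_contra hB
  have h2 := notmem_imp_neg hX hBn hB
  apply hX.2.1
  have t : IsTautology (((conj X).imp B).imp ((((conj X).imp B.neg)).imp (conj X).neg)) := by
    intro v hb ha ho hi
    simp only [Formula.neg, hi]
    tauto
  exact NFProv.mp (prov_of_taut1 hp t) h2

lemma mem_subf_nsub {A B : Formula} (h : B ∈ subf A) : B ∈ nsub A :=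
  Finset.mem_union_left _ h

lemma simneg_mem_nsub {A B : Formula} (h : B ∈ subf A) : simneg B ∈ nsub A :=
  Finset.mem_union_right _ (Finset.mem_image_of_mem _ h)

lemma not_both {A : Formula} {X : Finset Formula} (hX : MaxCons NFProv A X)
    {B : Formula} (h1 : B ∈ X) (h2 : simneg B ∈ X) : False := by
  apply hX.2.1
  have p1 := mem_imp_prov (X := X) h1
  have p2 := mem_imp_prov (X := X) h2
  have t : IsTautology (((conj X).imp B).imp ((((conj X).imp (simneg B))).imp (conj X).neg)) := by
    intro v hb ha ho hi
    simp only [Formula.neg, hi, simneg_eval v hb hi]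
    tauto
  exact NFProv.mp (prov_of_taut1 p1 t) p2

lemma mem_or_simneg {A : Formula} {X : Finset Formula} (hX : MaxCons NFProv A X)
    {B : Formula} (hB : B ∈ subf A) (h : B ∉ X) : simneg B ∈ X := by
  by_contra h2
  have p1 := notmem_imp_neg hX (mem_subf_nsub hB) h
  have p2 := notmem_imp_neg hX (simneg_mem_nsub hB) h2
  apply hX.2.1
  have t : IsTautology (((conj X).imp B.neg).imp ((((conj X).imp (simneg B).neg)).imp (conj X).neg)) := by
    intro v hb ha ho hi
    simp only [Formula.neg, hi, simneg_eval v hb hi]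
    tauto
  exact NFProv.mp (prov_of_taut1 p1 t) p2

end Aux2
section Aux3

lemma lindenbaum_aux (A : Formula) : ∀ n (X : Finset Formula),
    (nsub A \ X).card ≤ n → X ⊆ nsub A → Cons NFProv X →
    ∃ Y, X ⊆ Y ∧ MaxCons NFProv A Y := by
  intro n
  induction n with
  | zero =>
      intro X hc hsub hcons
      refine ⟨X, le_refl _, hsub, hcons, ?_⟩
      intro B hB hBX
      exfalso
      apply hBX
      have : nsub A \ X = ∅ := Finset.card_eq_zero.mp (Nat.le_zero.mp hc)
      by_contra h
      have : B ∈ nsub A \ X := Finset.mem_sdiff.mpr ⟨hB, h⟩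
      simp [‹nsub A \ X = ∅›] at this
  | succ n ih =>
      intro X hc hsub hcons
      by_cases hmax : ∀ B ∈ nsub A, B ∉ X → ¬ Cons NFProv (insert B X)
      · exact ⟨X, le_refl _, hsub, hcons, hmax⟩
      · push_neg at hmax
        obtain ⟨B, hBn, hBX, hBc⟩ := hmax
        have hcard : (nsub A \ insert B X).card ≤ n := by
          have h1 : nsub A \ insert B X = (nsub A \ X).erase B := by
            ext C
            simp [Finset.mem_sdiff, Finset.mem_erase, Finset.mem_insert]
            tauto
          rw [h1, Finset.card_erase_of_mem (Finset.mem_sdiff.mpr ⟨hBn, hBX⟩)]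
          omega
        obtain ⟨Y, hXY, hY⟩ := ih (insert B X) hcard
          (Finset.insert_subset hBn hsub) hBc
        exact ⟨Y, (Finset.subset_insert _ _).trans hXY, hY⟩

lemma lindenbaum {A : Formula} {X : Finset Formula} (hsub : X ⊆ nsub A)
    (hcons : Cons NFProv X) : ∃ Y, X ⊆ Y ∧ MaxCons NFProv A Y :=
  lindenbaum_aux A _ X (le_refl _) hsub hcons

lemma mem_subf_self (B : Formula) : B ∈ subf B := by
  cases B <;> simp [subf]

lemma subf_trans : ∀ B C : Formula, C ∈ subf B → subf C ⊆ subf B := by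
  intro B
  induction B with
  | var n => intro C hC; simp [subf] at hC; subst hC; simp [subf]
  | bot => intro C hC; simp [subf] at hC; subst hC; simp [subf]
  | and B1 B2 ih1 ih2 =>
      intro C hC
      rcases Finset.mem_insert.mp hC with rfl | hC
      · exact Finset.Subset.refl _
      · rcases Finset.mem_union.mp hC with h | h
        · exact (ih1 C h).trans ((Finset.subset_union_left).trans (Finset.subset_insert _ _))
        · exact (ih2 C h).trans ((Finset.subset_union_right).trans (Finset.subset_insert _ _))
  | or B1 B2 ih1 ih2 =>
      intro C hC
      rcases Finset.mem_insert.mp hC with rfl | hC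
      · exact Finset.Subset.refl _
      · rcases Finset.mem_union.mp hC with h | h
        · exact (ih1 C h).trans ((Finset.subset_union_left).trans (Finset.subset_insert _ _))
        · exact (ih2 C h).trans ((Finset.subset_union_right).trans (Finset.subset_insert _ _))
  | imp B1 B2 ih1 ih2 =>
      intro C hC
      rcases Finset.mem_insert.mp hC with rfl | hC
      · exact Finset.Subset.refl _
      · rcases Finset.mem_union.mp hC with h | h
        · exact (ih1 C h).trans ((Finset.subset_union_left).trans (Finset.subset_insert _ _))
        · exact (ih2 C h).trans ((Finset.subset_union_right).trans (Finset.subset_insert _ _))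
  | box B1 ih =>
      intro C hC
      rcases Finset.mem_insert.mp hC with rfl | hC
      · exact Finset.Subset.refl _
      · exact (ih C hC).trans (Finset.subset_insert _ _)

end Aux3
section Truth

lemma bot_not_mem {A : Formula} {X : Finset Formula} (hX : MaxCons NFProv A X) :
    Formula.bot ∉ X := by
  intro h
  exact hX.2.1 (mem_imp_prov h)

lemma cons_simneg_single {B : Formula} (h : ¬ NFProv B) : Cons NFProv {simneg B} := by
  intro hc
  apply h
  refine prov_of_taut1 hc ?_
  intro v hb ha ho hi
  simp only [Formula.neg, hi, conj_eval v ha hi, Finset.mem_singleton,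
    forall_eq, simneg_eval v hb hi]
  tauto

lemma truth_lemma (A : Formula) :
    ∀ B, B ∈ subf A → ∀ X : {X : Finset Formula // MaxCons NFProv A X},
      Sat (canRel NFProv A) (canVal NFProv A) X B ↔ B ∈ X.1 := by
  intro B
  induction B with
  | var n => intro _ X; simp [Sat, canVal]
  | bot =>
      intro _ X
      simp only [Sat]
      exact ⟨fun h => h.elim, fun h => bot_not_mem X.2 h⟩
  | and B1 B2 ih1 ih2 =>
      intro hB X
      have hB1 : B1 ∈ subf A := subf_trans A _ hB (by simp [subf, mem_subf_self])
      have hB2 : B2 ∈ subf A := subf_trans A _ hB (by simp [subf, mem_subf_self])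
      simp only [Sat, ih1 hB1 X, ih2 hB2 X]
      constructor
      · rintro ⟨h1, h2⟩
        apply prov_imp_mem X.2 (mem_subf_nsub hB)
        refine NFProv.mp (prov_of_taut1 (mem_imp_prov h1) ?_) (mem_imp_prov h2)
        intro v hb ha ho hi
        simp only [ha, hi]; tauto
      · intro h
        have p := mem_imp_prov h
        constructor
        · apply prov_imp_mem X.2 (mem_subf_nsub hB1)
          refine prov_of_taut1 p ?_
          intro v hb ha ho hi; simp only [ha, hi]; tauto
        · apply prov_imp_mem X.2 (mem_subf_nsub hB2)
          refine prov_of_taut1 p ?_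
          intro v hb ha ho hi; simp only [ha, hi]; tauto
  | or B1 B2 ih1 ih2 =>
      intro hB X
      have hB1 : B1 ∈ subf A := subf_trans A _ hB (by simp [subf, mem_subf_self])
      have hB2 : B2 ∈ subf A := subf_trans A _ hB (by simp [subf, mem_subf_self])
      simp only [Sat, ih1 hB1 X, ih2 hB2 X]
      constructor
      · intro h
        apply prov_imp_mem X.2 (mem_subf_nsub hB)
        rcases h with h | h
        · refine prov_of_taut1 (mem_imp_prov h) ?_
          intro v hb ha ho hi; simp only [ho, hi]; tauto
        · refine prov_of_taut1 (mem_imp_prov h) ?_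
          intro v hb ha ho hi; simp only [ho, hi]; tauto
      · intro h
        by_contra hc
        push_neg at hc
        obtain ⟨h1, h2⟩ := hc
        apply X.2.2.1
        have p1 := notmem_imp_neg X.2 (mem_subf_nsub hB1) h1
        have p2 := notmem_imp_neg X.2 (mem_subf_nsub hB2) h2
        have p := mem_imp_prov h
        refine NFProv.mp (NFProv.mp (prov_of_taut1 p ?_) p1) p2
        intro v hb ha ho hi
        simp only [Formula.neg, ho, hi]; tauto
  | imp B1 B2 ih1 ih2 =>
      intro hB X
      have hB1 : B1 ∈ subf A := subf_trans A _ hB (by simp [subf, mem_subf_self])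
      have hB2 : B2 ∈ subf A := subf_trans A _ hB (by simp [subf, mem_subf_self])
      simp only [Sat, ih1 hB1 X, ih2 hB2 X]
      constructor
      · intro h
        apply prov_imp_mem X.2 (mem_subf_nsub hB)
        by_cases h1 : B1 ∈ X.1
        · refine prov_of_taut1 (mem_imp_prov (h h1)) ?_
          intro v hb ha ho hi; simp only [hi]; tauto
        · refine prov_of_taut1 (notmem_imp_neg X.2 (mem_subf_nsub hB1) h1) ?_
          intro v hb ha ho hi; simp only [Formula.neg, hi]; tauto
      · intro h h1
        apply prov_imp_mem X.2 (mem_subf_nsub hB2)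
        refine NFProv.mp (prov_of_taut1 (mem_imp_prov h) ?_) (mem_imp_prov h1)
        intro v hb ha ho hi; simp only [hi]; tauto
  | box B1 ih =>
      intro hB X
      have hB1 : B1 ∈ subf A := subf_trans A _ hB (by simp [subf, mem_subf_self])
      constructor
      · intro hSat
        by_contra hbox
        -- build a world containing simneg B1
        have hcons : Cons NFProv {simneg B1} := by
          apply cons_simneg_single
          intro hp
          apply hbox
          apply prov_imp_mem X.2 (mem_subf_nsub hB)
          refine prov_of_taut1 (NFProv.nec hp) ?_
          intro v hb ha ho hi; simp only [hi]; tauto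
        obtain ⟨Y, hsub, hY⟩ := lindenbaum
          (Finset.singleton_subset_iff.mpr (simneg_mem_nsub hB1)) hcons
        have hsn : simneg B1 ∈ Y := hsub (Finset.mem_singleton_self _)
        have hB1Y : B1 ∉ Y := fun hmem => not_both hY hmem hsn
        exact hB1Y ((ih hB1 ⟨Y, hY⟩).mp (hSat ⟨Y, hY⟩ (Or.inl hbox)))
      · intro hmem Y hR
        rcases hR with h | h
        · exact absurd hmem h
        · exact (ih hB1 Y).mpr h

end Truth

/-- If `NF ⊬ A` then `A` fails in a finite `Sub(A)`-transitive N-model: the canonical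
model of NF is `Sub(A)`-transitive (for every `□□B ∈ Sub(A)`, `X ≺_{□B} Y` and
`Y ≺_B Z` imply `X ≺_B Z`) and `A` fails at one of its worlds. -/
theorem stmt10 (A : Formula) (h : ¬ NFProv A) :
    Finite {X : Finset Formula // MaxCons NFProv A X} ∧
    (∀ B : Formula, B.box.box ∈ subf A →
      ∀ X Y Z : {X : Finset Formula // MaxCons NFProv A X},
        canRel NFProv A B.box X Y → canRel NFProv A B Y Z →
          canRel NFProv A B X Z) ∧
    ∃ X : {X : Finset Formula // MaxCons NFProv A X},
      ¬ Sat (canRel NFProv A) (canVal NFProv A) X A := by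
  refine ⟨?_, ?_, ?_⟩
  · exact Finite.of_injective
      (fun X => (⟨X.1, Finset.mem_powerset.mpr X.2.1⟩ : {Y // Y ∈ (nsub A).powerset}))
      (by intro a b hab
          apply Subtype.ext
          exact Subtype.mk_eq_mk.mp hab)
  · intro B hBB X Y Z h1 h2
    by_cases hbox : B.box ∈ X.1
    · have hbb : B.box.box ∈ X.1 := by
        apply prov_imp_mem X.2 (mem_subf_nsub hBB)
        refine NFProv.mp (prov_of_taut1 (mem_imp_prov hbox) ?_) (NFProv.four B)
        intro v hb ha ho hi; simp only [hi]; tauto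
      rcases h1 with h1 | h1
      · exact absurd hbb h1
      · rcases h2 with h2 | h2
        · exact absurd h1 h2
        · exact Or.inr h2
    · exact Or.inl hbox
  · obtain ⟨Y, hsub, hY⟩ := lindenbaum
      (Finset.singleton_subset_iff.mpr (simneg_mem_nsub (mem_subf_self A)))
      (cons_simneg_single h)
    refine ⟨⟨Y, hY⟩, ?_⟩
    intro hs
    exact not_both hY ((truth_lemma A A (mem_subf_self A) ⟨Y, hY⟩).mp hs)
      (hsub (Finset.mem_singleton_self _))
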